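/- Let ψ : ℝ → ℝ be nondecreasing, let x ∈ ℝ and r > 0, and let G be the Beurling–Ahlfors extension of ψ. Then for every (u,v) with u ∈ [x−r, x+r] and 0 < v ≤ r, the point G(u,v) lies in D[ψ(x), r′] with r′ = ψ(x+2r) − ψ(x−2r); that is, |(first coordinate of G(u,v)) − ψ(x)| ≤ r′ and 0 ≤ (second coordinate of G(u,v)) ≤ r′. -/
import Mathlib


open MeasureTheory

/-- The Beurling–Ahlfors extension of `ψ : ℝ → ℝ`, as a map on the (open) upper half-plane. -/
noncomputable def BA (ψ : ℝ → ℝ) (p : ℝ × ℝ) : ℝ × ℝ :=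
  ((1 / 2) * ∫ t in (0 : ℝ)..1, (ψ (p.1 + t * p.2) + ψ (p.1 - t * p.2)),
    ∫ t in (0 : ℝ)..1, (ψ (p.1 + t * p.2) - ψ (p.1 - t * p.2)))

theorem stmt8 (ψ : ℝ → ℝ) (hψ : Monotone ψ) (x r : ℝ) (hr : 0 < r)
    (u v : ℝ) (hu : u ∈ Set.Icc (x - r) (x + r)) (hv1 : 0 < v) (hv2 : v ≤ r) :
    |(BA ψ (u, v)).1 - ψ x| ≤ ψ (x + 2 * r) - ψ (x - 2 * r) ∧
      0 ≤ (BA ψ (u, v)).2 ∧ (BA ψ (u, v)).2 ≤ ψ (x + 2 * r) - ψ (x - 2 * r) := by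
  obtain ⟨hu1, hu2⟩ := hu
  have hmono : Monotone (fun t : ℝ => ψ (u + t * v)) :=
    hψ.comp (fun a b hab => by nlinarith)
  have hanti : Antitone (fun t : ℝ => ψ (u - t * v)) :=
    fun a b hab => hψ (by nlinarith)
  have hi1 : IntervalIntegrable (fun t : ℝ => ψ (u + t * v)) volume 0 1 :=
    hmono.intervalIntegrable
  have hi2 : IntervalIntegrable (fun t : ℝ => ψ (u - t * v)) volume 0 1 :=
    hanti.intervalIntegrable
  set A := ∫ t in (0:ℝ)..1, ψ (u + t * v) with hA
  set B := ∫ t in (0:ℝ)..1, ψ (u - t * v) with hB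
  have hub : ∀ t ∈ Set.Icc (0:ℝ) 1, ψ (u + t * v) ≤ ψ (x + 2 * r) := by
    intro t ht
    exact hψ (by nlinarith [ht.1, ht.2])
  have hlb : ∀ t ∈ Set.Icc (0:ℝ) 1, ψ (x - 2 * r) ≤ ψ (u + t * v) := by
    intro t ht
    exact hψ (by nlinarith [ht.1, ht.2])
  have hub2 : ∀ t ∈ Set.Icc (0:ℝ) 1, ψ (u - t * v) ≤ ψ (x + 2 * r) := by
    intro t ht
    exact hψ (by nlinarith [ht.1, ht.2])
  have hlb2 : ∀ t ∈ Set.Icc (0:ℝ) 1, ψ (x - 2 * r) ≤ ψ (u - t * v) := by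
    intro t ht
    exact hψ (by nlinarith [ht.1, ht.2])
  have hc : ∀ c : ℝ, (∫ _ in (0:ℝ)..1, c) = c := by
    intro c; simp
  have hA1 : A ≤ ψ (x + 2 * r) := by
    have := intervalIntegral.integral_mono_on (by norm_num : (0:ℝ) ≤ 1) hi1
      intervalIntegrable_const hub
    simpa [hc] using this
  have hA2 : ψ (x - 2 * r) ≤ A := by
    have := intervalIntegral.integral_mono_on (by norm_num : (0:ℝ) ≤ 1)
      intervalIntegrable_const hi1 hlb
    simpa [hc] using this
  have hB1 : B ≤ ψ (x + 2 * r) := by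
    have := intervalIntegral.integral_mono_on (by norm_num : (0:ℝ) ≤ 1) hi2
      intervalIntegrable_const hub2
    simpa [hc] using this
  have hB2 : ψ (x - 2 * r) ≤ B := by
    have := intervalIntegral.integral_mono_on (by norm_num : (0:ℝ) ≤ 1)
      intervalIntegrable_const hi2 hlb2
    simpa [hc] using this
  have hBA : B ≤ A := by
    refine intervalIntegral.integral_mono_on (by norm_num : (0:ℝ) ≤ 1) hi2 hi1 ?_
    intro t ht
    exact hψ (by nlinarith [ht.1, ht.2])
  have hx1 : ψ (x - 2 * r) ≤ ψ x := hψ (by linarith)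
  have hx2 : ψ x ≤ ψ (x + 2 * r) := hψ (by linarith)
  have h1 : (BA ψ (u, v)).1 = (1 / 2) * (A + B) := by
    simp only [BA]
    rw [intervalIntegral.integral_add hi1 hi2]
  have h2 : (BA ψ (u, v)).2 = A - B := by
    simp only [BA]
    rw [intervalIntegral.integral_sub hi1 hi2]
  rw [h1, h2]
  refine ⟨abs_sub_le_iff.mpr ⟨by linarith, by linarith⟩, by linarith, by linarith⟩
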